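/- The heteroscedastic regression loss, at the optimal noise estimate σ_i² = (y_i − ŷ_i)² for each sample with nonzero residual, equals (1/N) Σ_i (1 + ln (y_i − ŷ_i)²)/2; in particular, minimizing the loss over predictions ŷ is equivalent to minimizing the sum of log squared residuals. -/

import Mathlib

/-- At the optimal noise estimates `σᵢ² = (yᵢ − ŷᵢ)²`, the heteroscedastic loss equals
`(1/N) Σᵢ (1 + ln (yᵢ − ŷᵢ)²)/2`; hence minimizing over predictions is equivalent to
minimizing the sum of log squared residuals. -/
theorem heteroscedastic_loss_at_optimum (N : ℕ) (hN : 1 ≤ N)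
    (y yhat yhat' : Fin N → ℝ)
    (h : ∀ i, y i ≠ yhat i) (h' : ∀ i, y i ≠ yhat' i) :
    ((1 : ℝ) / N) * ∑ i, ((y i - yhat i) ^ 2 / (2 * (y i - yhat i) ^ 2)
        + Real.log ((y i - yhat i) ^ 2) / 2)
      = ((1 : ℝ) / N) * ∑ i, (1 + Real.log ((y i - yhat i) ^ 2)) / 2 ∧
    (((1 : ℝ) / N) * ∑ i, ((y i - yhat i) ^ 2 / (2 * (y i - yhat i) ^ 2)
        + Real.log ((y i - yhat i) ^ 2) / 2)
      ≤ ((1 : ℝ) / N) * ∑ i, ((y i - yhat' i) ^ 2 / (2 * (y i - yhat' i) ^ 2)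
        + Real.log ((y i - yhat' i) ^ 2) / 2)
      ↔ ∑ i, Real.log ((y i - yhat i) ^ 2) ≤ ∑ i, Real.log ((y i - yhat' i) ^ 2)) := by
  have key : ∀ (z : Fin N → ℝ), (∀ i, y i ≠ z i) →
      ∑ i, ((y i - z i) ^ 2 / (2 * (y i - z i) ^ 2) + Real.log ((y i - z i) ^ 2) / 2)
        = ∑ i, (1 + Real.log ((y i - z i) ^ 2)) / 2 := by
    intro z hz
    refine Finset.sum_congr rfl fun i _ => ?_
    have hne : (y i - z i) ^ 2 ≠ 0 := pow_ne_zero _ (sub_ne_zero.mpr (hz i))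
    have hne1 : y i - z i ≠ 0 := sub_ne_zero.mpr (hz i)
    field_simp
  have hNpos : (0 : ℝ) < 1 / N := by positivity
  refine ⟨by rw [key yhat h], ?_⟩
  rw [key yhat h, key yhat' h']
  rw [mul_le_mul_iff_right₀ hNpos]
  simp only [Finset.sum_div, add_div, Finset.sum_add_distrib]
  constructor
  · intro hle
    have := add_le_add_iff_left (∑ i : Fin N, (1:ℝ)/2) |>.mp hle
    have h2 : (0:ℝ) < 2 := by norm_num
    calc ∑ i, Real.log ((y i - yhat i) ^ 2)
        = 2 * ∑ i, Real.log ((y i - yhat i) ^ 2) / 2 := by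
          rw [Finset.mul_sum]; exact Finset.sum_congr rfl fun i _ => by ring
      _ ≤ 2 * ∑ i, Real.log ((y i - yhat' i) ^ 2) / 2 := by
          exact mul_le_mul_of_nonneg_left this (by norm_num)
      _ = ∑ i, Real.log ((y i - yhat' i) ^ 2) := by
          rw [Finset.mul_sum]; exact Finset.sum_congr rfl fun i _ => by ring
  · intro hle
    have h2 : ∑ i, Real.log ((y i - yhat i) ^ 2) / 2
        ≤ ∑ i, Real.log ((y i - yhat' i) ^ 2) / 2 := by
      rw [← Finset.sum_div, ← Finset.sum_div]
      gcongr
    linarith
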